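/- arXiv:2601.05588 — 3 statements merged into one kernel-verified Lean document; each statement's English description precedes it below -/
import Mathlib

section
/- Let k ≥ 2 and n ≥ 1 be natural numbers with n < ln(k!)/(2·ln k). Then for every family of k points d₁, …, d_k in ℝⁿ there exists a permutation π of {1, …, k} such that no point q ∈ ℝⁿ satisfies ‖q − d_{π(1)}‖₂ < ‖q − d_{π(2)}‖₂ < ⋯ < ‖q − d_{π(k)}‖₂. Consequently, no dual encoder with embedding dimension n (which scores a query–document pair by the negated Euclidean distance between their embeddings) can solve a complete ranking task over a corpus of k documents. -/
/-!
A query point `q` determines, for every ordered pair `(i, j)` of distinct documents, whether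
`q` is closer to `dᵢ` than to `dⱼ`, i.e. whether the affine functional
`q ↦ ‖q - dⱼ‖² - ‖q - dᵢ‖²` is positive, and this sign pattern determines the ranking
realized by `q`. Sign patterns of affine functionals on `ℝⁿ` form a set family of
VC dimension at most `n`: on `n + 1` functionals the linear parts are dependent, so the values
lie on a hyperplane, which misses some open orthant. By the Sauer–Shelah lemma there are
at most `(k² - k + 1)ⁿ ≤ k^(2n)` patterns, fewer than the `k!` rankings.
-/

open Finset Module Nat

section Orthant

variable {α : Type*} {T : Finset α} {a x : α → ℝ}

lemma mul_nonneg_of_pos_iff {a x : ℝ} (h : 0 < a ↔ 0 < x) : 0 ≤ a * x := by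
  rcases lt_or_ge 0 a with ha | ha
  · exact (mul_pos ha (h.1 ha)).le
  · exact mul_nonneg_of_nonpos_of_nonpos ha (not_lt.1 (mt h.2 ha.not_gt))

lemma sum_mul_nonneg_of_pos_iff (h : ∀ p ∈ T, 0 < a p ↔ 0 < x p) :
    0 ≤ ∑ p ∈ T, a p * x p :=
  sum_nonneg fun p hp => mul_nonneg_of_pos_iff (h p hp)

lemma sum_mul_pos_of_pos_iff (h : ∀ p ∈ T, 0 < a p ↔ 0 < x p) {j : α} (hjT : j ∈ T)
    (hj : 0 < a j) : 0 < ∑ p ∈ T, a p * x p :=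
  sum_pos' (fun p hp => mul_nonneg_of_pos_iff (h p hp)) ⟨j, hjT, mul_pos hj ((h j hjT).1 hj)⟩

lemma exists_subset_forall_sum_mul_ne {j : α} (hjT : j ∈ T) (hj : a j ≠ 0) (b : ℝ) :
    ∃ S ⊆ T, ∀ x : α → ℝ, (∀ p ∈ T, p ∈ S ↔ 0 < x p) → ∑ p ∈ T, a p * x p ≠ b := by
  classical
  wlog hpos : 0 < a j generalizing a b
  · obtain ⟨S, hST, hS⟩ := this (a := -a) (neg_ne_zero.2 hj) (-b)
      (neg_pos.2 (lt_of_le_of_ne (not_lt.1 hpos) hj))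
    refine ⟨S, hST, fun x hx hsum => hS x hx ?_⟩
    simp only [Pi.neg_apply, neg_mul, sum_neg_distrib, hsum]
  rcases le_or_gt b 0 with hb | hb
  · refine ⟨{p ∈ T | 0 < a p}, filter_subset _ _, fun x hx => ?_⟩
    have hx' : ∀ p ∈ T, 0 < a p ↔ 0 < x p := fun p hp => by simp [← hx p hp, hp]
    exact (hb.trans_lt (sum_mul_pos_of_pos_iff hx' hjT hpos)).ne'
  · refine ⟨{p ∈ T | 0 < -a p}, filter_subset _ _, fun x hx => ?_⟩
    have hx' : ∀ p ∈ T, 0 < (-a) p ↔ 0 < x p := fun p hp => by simp [← hx p hp, hp]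
    have hneg := sum_mul_nonneg_of_pos_iff hx'
    simp only [Pi.neg_apply, neg_mul, sum_neg_distrib, neg_nonneg] at hneg
    exact (hneg.trans_lt hb).ne

end Orthant

section AffinePattern

variable {α E : Type*} [AddCommGroup E] [Module ℝ E] {T : Finset α} {a : α → ℝ}

noncomputable def posPattern [Fintype α] (ℓ : α → E →ᵃ[ℝ] ℝ) (q : E) : Finset α :=
  {p | 0 < ℓ p q}

lemma sum_mul_apply_eq_of_sum_smul_linear_eq_zero {ℓ : α → E →ᵃ[ℝ] ℝ}
    (h : ∑ p ∈ T, a p • (ℓ p).linear = 0) (q : E) :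
    ∑ p ∈ T, a p * ℓ p q = ∑ p ∈ T, a p * ℓ p 0 := by
  have hq := LinearMap.congr_fun h q
  simp only [LinearMap.coe_sum, LinearMap.coe_smul, Finset.sum_apply, Pi.smul_apply, smul_eq_mul,
    LinearMap.zero_apply] at hq
  rw [← sub_eq_zero, ← sum_sub_distrib, ← hq]
  refine sum_congr rfl fun p _ => ?_
  rw [← mul_sub, (ℓ p).decomp]
  simp

variable [FiniteDimensional ℝ E] [Fintype α] [DecidableEq α]

theorem card_le_finrank_of_shatters {ℓ : α → E →ᵃ[ℝ] ℝ} {𝒜 : Finset (Finset α)}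
    (h𝒜 : ∀ s ∈ 𝒜, ∃ q, posPattern ℓ q = s) (hT : 𝒜.Shatters T) : #T ≤ finrank ℝ E := by
  by_contra! hcard
  have hdep : ¬ LinearIndepOn ℝ (fun p => (ℓ p).linear) (T : Set α) := fun hli => by
    have := LinearIndependent.fintype_card_le_finrank hli
    simp only [coe_sort_coe, Fintype.card_coe, Subspace.dual_finrank_eq] at this
    omega
  obtain ⟨a, hrel, j, hjT, hj⟩ := not_linearIndepOn_finset_iff.1 hdep
  obtain ⟨S, hST, hS⟩ := exists_subset_forall_sum_mul_ne hjT hj (∑ p ∈ T, a p * ℓ p 0)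
  obtain ⟨s, hs𝒜, hTs⟩ := hT hST
  obtain ⟨q, rfl⟩ := h𝒜 s hs𝒜
  refine hS (fun p => ℓ p q) (fun p hp => ?_) (sum_mul_apply_eq_of_sum_smul_linear_eq_zero hrel q)
  simp [← hTs, hp, posPattern]

theorem vcDim_le_finrank {ℓ : α → E →ᵃ[ℝ] ℝ} {𝒜 : Finset (Finset α)}
    (h𝒜 : ∀ s ∈ 𝒜, ∃ q, posPattern ℓ q = s) : 𝒜.vcDim ≤ finrank ℝ E :=
  Finset.sup_le fun _ hT => card_le_finrank_of_shatters h𝒜 (mem_shatterer.1 hT)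

end AffinePattern

lemma sum_choose_le_succ_pow (m n : ℕ) : ∑ j ∈ Iic n, m.choose j ≤ (m + 1) ^ n := by
  rw [add_pow, ← Nat.range_succ_eq_Iic]
  refine sum_le_sum fun j hj => ?_
  rw [one_pow, mul_one]
  exact (Nat.choose_le_pow m j).trans
    (Nat.le_mul_of_pos_right _ (Nat.choose_pos (Nat.lt_succ_iff.1 (mem_range.1 hj))))

theorem Finset.card_le_succ_pow_of_vcDim_le {α : Type*} [Fintype α] [DecidableEq α]
    {𝒜 : Finset (Finset α)} {n : ℕ} (h : 𝒜.vcDim ≤ n) : #𝒜 ≤ (Fintype.card α + 1) ^ n :=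
  calc #𝒜 ≤ #𝒜.shatterer := card_le_card_shatterer 𝒜
    _ ≤ ∑ j ∈ Iic 𝒜.vcDim, (Fintype.card α).choose j := card_shatterer_le_sum_vcDim
    _ ≤ ∑ j ∈ Iic n, (Fintype.card α).choose j := sum_le_sum_of_subset (Iic_subset_Iic.2 h)
    _ ≤ (Fintype.card α + 1) ^ n := sum_choose_le_succ_pow _ _

lemma Fintype.card_offDiag_add_one_le {ι : Type*} [Fintype ι] [DecidableEq ι] [Nonempty ι] :
    Fintype.card {p : ι × ι // p.1 ≠ p.2} + 1 ≤ Fintype.card ι ^ 2 := by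
  obtain ⟨i⟩ := ‹Nonempty ι›
  have := Fintype.card_subtype_lt (p := fun p : ι × ι => p.1 ≠ p.2) (x := (i, i)) (by simp)
  rwa [Fintype.card_prod, ← sq] at this

lemma Equiv.Perm.eq_of_strictMono_comp {β : Type*} [LinearOrder β] {k : ℕ} {f g : Fin k → β}
    {π σ : Equiv.Perm (Fin k)} (hπ : StrictMono (f ∘ π)) (hσ : StrictMono (g ∘ σ))
    (hfg : ∀ i j, i ≠ j → (f i < f j ↔ g i < g j)) : π = σ := by
  have hgπ : StrictMono (g ∘ π) := fun a b hab =>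
    (hfg _ _ (π.injective.ne hab.ne)).1 (hπ hab)
  have hg : Function.Injective g := by
    simpa using hσ.injective.comp σ.symm.injective
  exact Equiv.ext (congrFun (hg.comp_left (Tuple.unique_monotone hgπ.monotone hσ.monotone)))

section Bisector

variable {E : Type*} [NormedAddCommGroup E] [InnerProductSpace ℝ E]

noncomputable def sqDistDiff (x y : E) : E →ᵃ[ℝ] ℝ where
  toFun q := ‖q - y‖ ^ 2 - ‖q - x‖ ^ 2
  linear := innerₛₗ ℝ ((2 : ℝ) • (x - y))
  map_vadd' q v := by
    simp only [vadd_eq_add, innerₛₗ_apply_apply, add_sub_assoc, norm_add_sq_real]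
    rw [real_inner_smul_left]
    simp only [inner_sub_right, real_inner_comm v]
    ring

lemma sqDistDiff_pos_iff {x y q : E} : 0 < sqDistDiff x y q ↔ ‖q - x‖ < ‖q - y‖ := by
  rw [← sq_lt_sq₀ (norm_nonneg _) (norm_nonneg _)]
  exact sub_pos

noncomputable def sqDistDiffPairs {ι : Type*} (d : ι → E) (p : {p : ι × ι // p.1 ≠ p.2}) :
    E →ᵃ[ℝ] ℝ :=
  sqDistDiff (d p.1.1) (d p.1.2)

lemma perm_eq_of_posPattern_eq {k : ℕ} {d : Fin k → E} {π σ : Equiv.Perm (Fin k)} {q r : E}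
    (hq : StrictMono fun i => ‖q - d (π i)‖) (hr : StrictMono fun i => ‖r - d (σ i)‖)
    (h : posPattern (sqDistDiffPairs d) q = posPattern (sqDistDiffPairs d) r) : π = σ := by
  refine Equiv.Perm.eq_of_strictMono_comp (f := fun i => ‖q - d i‖) (g := fun i => ‖r - d i‖)
    hq hr fun i j hij => ?_
  have hmem := congrArg (⟨(i, j), hij⟩ ∈ ·) h
  simpa [posPattern, sqDistDiffPairs, sqDistDiff_pos_iff] using hmem

end Bisector

lemma log_factorial_div_le_of_factorial_le {k n : ℕ} (hk : 1 < k) (h : k ! ≤ k ^ (2 * n)) :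
    Real.log k ! / (2 * Real.log k) ≤ n := by
  have hlogk : 0 < Real.log k := Real.log_pos (by exact_mod_cast hk)
  rw [div_le_iff₀ (by positivity)]
  calc Real.log k ! ≤ Real.log ((k : ℝ) ^ (2 * n)) :=
        Real.log_le_log (by exact_mod_cast k.factorial_pos) (by exact_mod_cast h)
    _ = n * (2 * Real.log k) := by rw [Real.log_pow]; push_cast; ring

theorem de_insufficiency_for_complete_ranking_general
    (k n : ℕ) (hk : 2 ≤ k)
    (hdim : (n : ℝ) < Real.log (Nat.factorial k) / (2 * Real.log k)) :
    ∀ d : Fin k → EuclideanSpace ℝ (Fin n),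
      ∃ π : Equiv.Perm (Fin k),
        ¬ ∃ q : EuclideanSpace ℝ (Fin n),
            StrictMono (fun i : Fin k => ‖q - d (π i)‖) := by
  intro d
  by_contra! hrealized
  choose q hq using hrealized
  have hinj : Function.Injective fun π => posPattern (sqDistDiffPairs d) (q π) :=
    fun π σ h => perm_eq_of_posPattern_eq (hq π) (hq σ) h
  have : Nonempty (Fin k) := ⟨⟨0, by omega⟩⟩
  have hcount : k ! ≤ k ^ (2 * n) :=
    calc k ! = #(univ.image fun π => posPattern (sqDistDiffPairs d) (q π)) := by
          rw [card_image_of_injective _ hinj, Finset.card_univ, Fintype.card_perm, Fintype.card_fin]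
      _ ≤ (Fintype.card {p : Fin k × Fin k // p.1 ≠ p.2} + 1) ^ n :=
          card_le_succ_pow_of_vcDim_le <| (vcDim_le_finrank (ℓ := sqDistDiffPairs d) (by simp)).trans_eq
            (finrank_euclideanSpace_fin (𝕜 := ℝ))
      _ ≤ (k ^ 2) ^ n := by
          gcongr
          simpa using Fintype.card_offDiag_add_one_le (ι := Fin k)
      _ = k ^ (2 * n) := (pow_mul k 2 n).symm
  exact hdim.not_ge (log_factorial_div_le_of_factorial_le hk hcount)

/-- If `k ≥ 2`, `n ≥ 1` and `n < ln(k!)/(2 ln k)`, then for every family of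
`k` points in `ℝⁿ` there is a permutation `π` of the points that is not realized as a
distance permutation by any query point `q ∈ ℝⁿ` (i.e. no `q` has strictly increasing
Euclidean distances to the points along `π`).  Consequently no dual encoder with
embedding dimension `n` (scoring by negated Euclidean distance) can solve a complete
ranking task over a corpus of `k` documents. -/
theorem de_insufficiency_for_complete_ranking
    (k n : ℕ) (hk : 2 ≤ k) (hn : 1 ≤ n)
    (hdim : (n : ℝ) < Real.log (Nat.factorial k) / (2 * Real.log k)) :
    ∀ d : Fin k → EuclideanSpace ℝ (Fin n),
      ∃ π : Equiv.Perm (Fin k),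
        ¬ ∃ q : EuclideanSpace ℝ (Fin n),
            StrictMono (fun i : Fin k => ‖q - d (π i)‖) :=
  de_insufficiency_for_complete_ranking_general k n hk hdim
end

section
/- Let E ∈ ℝ^{m×n} be a matrix whose rows are token embeddings, and let E′ ∈ ℝ^{m×(n+1)} be E augmented with a column of all ones. Then the following are equivalent: (i) for every strictly positive probability distribution p on {1, …, m} there exists φ ∈ ℝⁿ with softmax(Eφ) = p; (ii) rank(E′) = m. -/
/-- The softmax of a logit vector `z ∈ ℝ^m`. -/
noncomputable def softmax {m : ℕ} (z : Fin m → ℝ) : Fin m → ℝ :=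
  fun i => Real.exp (z i) / ∑ j, Real.exp (z j)

/-- The matrix `E ∈ ℝ^{m×n}` augmented with a column of all ones, `E′ ∈ ℝ^{m×(n+1)}`. -/
def augmentOnes {m n : ℕ} (E : Matrix (Fin m) (Fin n) ℝ) :
    Matrix (Fin m) (Fin (n + 1)) ℝ :=
  fun i j => if hj : (j : ℕ) < n then E i ⟨j, hj⟩ else 1

lemma rank_eq_iff_surj {m n : ℕ} (A : Matrix (Fin m) (Fin n) ℝ) :
    A.rank = m ↔ Function.Surjective A.mulVec := by
  rw [Matrix.rank]
  constructor
  · intro h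
    have : LinearMap.range A.mulVecLin = ⊤ := by
      apply Submodule.eq_top_of_finrank_eq
      rw [h, Module.finrank_fin_fun]
    intro v
    exact (LinearMap.range_eq_top.mp this) v
  · intro h
    rw [LinearMap.range_eq_top.mpr h, finrank_top, Module.finrank_fin_fun]

lemma sum_exp_pos {m : ℕ} [Nonempty (Fin m)] (z : Fin m → ℝ) :
    0 < ∑ j, Real.exp (z j) :=
  Finset.sum_pos (fun j _ => Real.exp_pos _) Finset.univ_nonempty

lemma softmax_shift {m : ℕ} (z : Fin m → ℝ) (c : ℝ) :
    softmax (fun i => z i + c) = softmax z := by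
  funext i
  simp only [softmax, Real.exp_add, ← Finset.sum_mul]
  rw [mul_div_mul_right _ _ (Real.exp_ne_zero c)]

lemma augment_mulVec {m n : ℕ} (E : Matrix (Fin m) (Fin n) ℝ) (φ : Fin n → ℝ) (c : ℝ) :
    (augmentOnes E).mulVec
      (fun j => if hj : (j : ℕ) < n then φ ⟨j, hj⟩ else c)
      = fun i => E.mulVec φ i + c := by
  funext i
  simp only [Matrix.mulVec, dotProduct, augmentOnes]
  rw [Fin.sum_univ_castSucc]
  have h1 : ∀ j : Fin n, ((Fin.castSucc j : Fin (n+1)) : ℕ) < n := fun j => j.isLt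
  have h2 : ¬ ((Fin.last n : ℕ) < n) := lt_irrefl n
  simp only [dif_pos (h1 _), dif_neg h2, one_mul]
  congr 1

/-- Arbitrary distributions over tokens: an infinite-capacity ARR with
token-embedding matrix `E` can produce every strictly positive probability distribution
over the `m` tokens iff the augmented matrix `E′` has rank `m`. -/
theorem arbitrary_token_distributions_iff_rank
    (m n : ℕ) (E : Matrix (Fin m) (Fin n) ℝ) :
    (∀ p : Fin m → ℝ, (∀ i, 0 < p i) → (∑ i, p i) = 1 →
        ∃ φ : Fin n → ℝ, softmax (E.mulVec φ) = p) ↔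
    (augmentOnes E).rank = m := by
  rw [rank_eq_iff_surj]
  constructor
  · intro h z
    cases isEmpty_or_nonempty (Fin m) with
    | inl hE => exact ⟨0, funext fun i => (IsEmpty.false i).elim⟩
    | inr hN =>
      have hSz := sum_exp_pos z
      obtain ⟨φ, hφ⟩ := h (softmax z)
        (fun i => div_pos (Real.exp_pos _) hSz)
        (by
          simp only [softmax, ← Finset.sum_div]
          exact div_self (ne_of_gt hSz))
      -- from softmax (E.mulVec φ) = softmax z derive E.mulVec φ = z - c
      have hS := sum_exp_pos (E.mulVec φ)
      set c : ℝ := Real.log ((∑ j, Real.exp (z j)) / ∑ j, Real.exp (E.mulVec φ j)) with hc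
      refine ⟨fun j => if hj : (j : ℕ) < n then φ ⟨j, hj⟩ else c, ?_⟩
      rw [augment_mulVec]
      funext i
      have hi : Real.exp (E.mulVec φ i) / ∑ j, Real.exp (E.mulVec φ j)
          = Real.exp (z i) / ∑ j, Real.exp (z j) := congrFun hφ i
      have : Real.exp (E.mulVec φ i + c) = Real.exp (z i) := by
        rw [Real.exp_add, hc, Real.exp_log (div_pos hSz hS)]
        field_simp at hi ⊢
        linarith [hi]
      exact Real.exp_injective this
  · intro h p hp hsum
    obtain ⟨ψ, hψ⟩ := h (fun i => Real.log (p i))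
    refine ⟨fun j => ψ (Fin.castSucc j), ?_⟩
    set c := ψ (Fin.last n) with hcdef
    have hmv : E.mulVec (fun j => ψ (Fin.castSucc j)) = fun i => Real.log (p i) - c := by
      funext i
      have := congrFun hψ i
      simp only [Matrix.mulVec, dotProduct, augmentOnes] at this ⊢
      rw [Fin.sum_univ_castSucc] at this
      have h2 : ¬ ((Fin.last n : ℕ) < n) := lt_irrefl n
      rw [dif_neg h2, one_mul] at this
      have hcs : ∀ j : Fin n,
          (if hj : ((Fin.castSucc j : Fin (n+1)) : ℕ) < n then E i ⟨(Fin.castSucc j : ℕ), hj⟩ else 1)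
            = E i j := fun j => dif_pos j.isLt
      simp only [hcs] at this
      linarith [this]
    rw [hmv]
    have : (fun i => Real.log (p i) - c) = (fun i => Real.log (p i) + (-c)) := by
      funext i; ring
    rw [this, softmax_shift]
    funext i
    simp only [softmax, Real.exp_log (hp _)]
    rw [hsum, div_one]
end

section
/- Let E′ ∈ ℝ^{m×(n+1)} be a matrix one of whose columns is the all-ones vector, and let h ∈ ℝ^m be a nonzero vector with hᵀE′ = 0. Set P = {i : h_i > 0} and N = {i : h_i < 0}. Then there is no vector z in the column space of E′ satisfying z_i > z_j for all i ∈ N and all j ∈ P. -/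
/-- Let `E′ ∈ ℝ^{m×(n+1)}` have an all-ones column, and let `h ≠ 0` satisfy
`hᵀE′ = 0`.  With `P = {i : h i > 0}` and `N = {i : h i < 0}`, no vector `z = E′φ′` in the
column space of `E′` satisfies `z i > z j` for all `i ∈ N` and `j ∈ P`. -/
theorem no_separating_logits_of_orthogonal_vector
    (m n : ℕ) (E' : Matrix (Fin m) (Fin (n + 1)) ℝ)
    (hcol : ∃ j₀ : Fin (n + 1), ∀ i, E' i j₀ = 1)
    (h : Fin m → ℝ) (hne : h ≠ 0)
    (horth : Matrix.vecMul h E' = 0) :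
    ¬ ∃ φ' : Fin (n + 1) → ℝ,
        ∀ i j : Fin m, h i < 0 → 0 < h j →
          E'.mulVec φ' j < E'.mulVec φ' i := by
  rintro ⟨φ', hsep⟩
  set z := E'.mulVec φ' with hzdef
  obtain ⟨j₀, hj₀⟩ := hcol
  -- sum of h is zero
  have hsum : ∑ i, h i = 0 := by
    have := congrFun horth j₀
    simpa [Matrix.vecMul, dotProduct, hj₀] using this
  -- h ⬝ z = 0
  have hz : ∑ i, h i * z i = 0 := by
    have : dotProduct h (E'.mulVec φ') = dotProduct (Matrix.vecMul h E') φ' :=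
      Matrix.dotProduct_mulVec h E' φ'
    simpa [horth, dotProduct] using this
  -- P and N are nonempty
  have hex : ∃ i, h i ≠ 0 := by
    by_contra hc
    push_neg at hc
    exact hne (funext fun i => hc i)
  have hP : ∃ j, 0 < h j := by
    by_contra hc
    push_neg at hc
    obtain ⟨i, hi⟩ := hex
    have hall : ∀ k ∈ Finset.univ, (0:ℝ) ≤ -h k := fun k _ => by linarith [hc k]
    have : ∑ k, -h k = 0 := by simpa using congrArg Neg.neg hsum
    have := (Finset.sum_eq_zero_iff_of_nonneg hall).mp this i (Finset.mem_univ i)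
    exact hi (by linarith)
  have hN : ∃ i, h i < 0 := by
    by_contra hc
    push_neg at hc
    obtain ⟨i, hi⟩ := hex
    have := (Finset.sum_eq_zero_iff_of_nonneg (fun k _ => hc k)).mp hsum i (Finset.mem_univ i)
    exact hi this
  classical
  set SP := Finset.univ.filter (fun j : Fin m => 0 < h j) with hSPdef
  set SN := Finset.univ.filter (fun i : Fin m => h i < 0) with hSNdef
  have hSP : SP.Nonempty := by
    obtain ⟨j, hj⟩ := hP
    exact ⟨j, by simp [hSPdef, hj]⟩
  have hSN : SN.Nonempty := by
    obtain ⟨i, hi⟩ := hN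
    exact ⟨i, by simp [hSNdef, hi]⟩
  set a := SP.sup' hSP z with hadef
  set b := SN.inf' hSN z with hbdef
  have hab : a < b := by
    rw [hadef, Finset.sup'_lt_iff]
    intro j hj
    rw [hbdef, Finset.lt_inf'_iff]
    intro i hi
    have hj' : 0 < h j := (Finset.mem_filter.mp hj).2
    have hi' : h i < 0 := (Finset.mem_filter.mp hi).2
    exact hsep i j hi' hj'
  set c := (a + b) / 2 with hcdef
  have hac : a < c := by rw [hcdef]; linarith
  have hcb : c < b := by rw [hcdef]; linarith
  -- sum of h i * (z i - c) equals 0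
  have hsum2 : ∑ i, h i * (z i - c) = 0 := by
    have : ∑ i, h i * (z i - c) = (∑ i, h i * z i) - c * ∑ i, h i := by
      rw [Finset.mul_sum, ← Finset.sum_sub_distrib]
      congr 1; ext i; ring
    rw [this, hz, hsum]; ring
  -- but each term is ≤ 0 with one strictly negative
  obtain ⟨j, hj⟩ := hP
  have hlt : ∑ i, h i * (z i - c) < ∑ i : Fin m, (0:ℝ) := by
    apply Finset.sum_lt_sum
    · intro i _
      rcases lt_trichotomy (h i) 0 with hi | hi | hi
      · have : b ≤ z i := Finset.inf'_le z (by simp [hSNdef, hi])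
        nlinarith
      · simp [hi]
      · have : z i ≤ a := Finset.le_sup' z (by simp [hSPdef, hi])
        nlinarith
    · refine ⟨j, Finset.mem_univ j, ?_⟩
      have : z j ≤ a := Finset.le_sup' z (by simp [hSPdef, hj])
      nlinarith
  simp only [Finset.sum_const_zero] at hlt
  rw [hsum2] at hlt
  exact lt_irrefl 0 hlt
end
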